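/- Fix an integer k ≥ 0 and set H_{−k}(p,q) = −(1/2)·[⟨Λ^{−k−1}p,p⟩ − Σ_{i=0}^{k} (⟨Λ^{−i−1}p,p⟩⟨Λ^{−k+i−1}q,q⟩ − ⟨Λ^{−i−1}p,q⟩⟨Λ^{−k+i−1}p,q⟩)]. Then at every point (p,q) with ⟨p,p⟩ = 1 and ⟨p,q⟩ = 0, the Dirac–Hamilton equations of H_{−k} coincide with the k-th backward Neumann system: for each coordinate index i, {p_i, H_{−k}}_D equals the i-th component of (1/2)·Σ_{j=0}^{k} (⟨Λ^{−j−1}p,q⟩ Λ^{−k+j−1}p + ⟨Λ^{−k+j−1}p,q⟩ Λ^{−j−1}p − 2⟨Λ^{−j−1}p,p⟩ Λ^{−k+j−1}q), and {q_i, H_{−k}}_D equals the i-th component of −Λ^{−k−1}p + ⟨Λ^{−k−1}p,p⟩ p + (1/2)·Σ_{j=0}^{k} (2⟨Λ^{−k+j−1}q,q⟩ Λ^{−j−1}p − ⟨Λ^{−j−1}p,q⟩ Λ^{−k+j−1}q − ⟨Λ^{−k+j−1}p,q⟩ Λ^{−j−1}q). -/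

import Mathlib

open Finset

/-- Partial derivative with respect to the coordinate `p_j`. -/
noncomputable def pderivP {N : ℕ} (f : (Fin N → ℝ) × (Fin N → ℝ) → ℝ)
    (x : (Fin N → ℝ) × (Fin N → ℝ)) (j : Fin N) : ℝ :=
  fderiv ℝ f x (Pi.single j 1, 0)

/-- Partial derivative with respect to the coordinate `q_j`. -/
noncomputable def pderivQ {N : ℕ} (f : (Fin N → ℝ) × (Fin N → ℝ) → ℝ)
    (x : (Fin N → ℝ) × (Fin N → ℝ)) (j : Fin N) : ℝ :=
  fderiv ℝ f x (0, Pi.single j 1)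

/-- The Poisson bracket `{f,g} = Σ_j (∂f/∂q_j ∂g/∂p_j - ∂f/∂p_j ∂g/∂q_j)`. -/
noncomputable def poisson {N : ℕ} (f g : (Fin N → ℝ) × (Fin N → ℝ) → ℝ)
    (x : (Fin N → ℝ) × (Fin N → ℝ)) : ℝ :=
  ∑ j, (pderivQ f x j * pderivP g x j - pderivP f x j * pderivQ g x j)

/-- The Casimir `F(p,q) = ⟨p,q⟩`. -/
noncomputable def casF {N : ℕ} (x : (Fin N → ℝ) × (Fin N → ℝ)) : ℝ :=
  ∑ j, x.1 j * x.2 j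

/-- The Casimir `G(p,q) = ⟨p,p⟩ - 1`. -/
noncomputable def casG {N : ℕ} (x : (Fin N → ℝ) × (Fin N → ℝ)) : ℝ :=
  (∑ j, x.1 j * x.1 j) - 1

/-- The Dirac-Poisson bracket
`{f,g}_D = {f,g} + (1/{F,G})({f,F}{G,g} - {f,G}{F,g})`. -/
noncomputable def dirac {N : ℕ} (f g : (Fin N → ℝ) × (Fin N → ℝ) → ℝ)
    (x : (Fin N → ℝ) × (Fin N → ℝ)) : ℝ :=
  poisson f g x + (1 / poisson casF casG x) *
    (poisson f casF x * poisson casG g x - poisson f casG x * poisson casF g x)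

/-- The Hamiltonian `H_{-k} = -(1/2) F_{-k}` of the `k`-th backward Neumann system. -/
noncomputable def Hneg {N : ℕ} (lam : Fin N → ℝ) (k : ℕ)
    (x : (Fin N → ℝ) × (Fin N → ℝ)) : ℝ :=
  -(1 / 2) * ((∑ j, ((lam j)⁻¹) ^ (k + 1) * x.1 j * x.1 j)
    - ∑ i ∈ Finset.range (k + 1),
        ((∑ j, ((lam j)⁻¹) ^ (i + 1) * x.1 j * x.1 j)
            * (∑ j, ((lam j)⁻¹) ^ (k - i + 1) * x.2 j * x.2 j)
         - (∑ j, ((lam j)⁻¹) ^ (i + 1) * x.1 j * x.2 j)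
            * (∑ j, ((lam j)⁻¹) ^ (k - i + 1) * x.1 j * x.2 j)))

/-- The `p`-component of the right-hand side of the `k`-th backward Neumann system. -/
noncomputable def bnP {N : ℕ} (lam : Fin N → ℝ) (k : ℕ)
    (p q : Fin N → ℝ) : Fin N → ℝ := fun i =>
  (1 / 2) * ∑ j ∈ Finset.range (k + 1),
    ((∑ l, ((lam l)⁻¹) ^ (j + 1) * p l * q l) * (((lam i)⁻¹) ^ (k - j + 1) * p i)
     + (∑ l, ((lam l)⁻¹) ^ (k - j + 1) * p l * q l) * (((lam i)⁻¹) ^ (j + 1) * p i)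
     - 2 * (∑ l, ((lam l)⁻¹) ^ (j + 1) * p l * p l) * (((lam i)⁻¹) ^ (k - j + 1) * q i))

/-- The `q`-component of the right-hand side of the `k`-th backward Neumann system. -/
noncomputable def bnQ {N : ℕ} (lam : Fin N → ℝ) (k : ℕ)
    (p q : Fin N → ℝ) : Fin N → ℝ := fun i =>
  -((lam i)⁻¹) ^ (k + 1) * p i + (∑ l, ((lam l)⁻¹) ^ (k + 1) * p l * p l) * p i
  + (1 / 2) * ∑ j ∈ Finset.range (k + 1),
      (2 * (∑ l, ((lam l)⁻¹) ^ (k - j + 1) * q l * q l) * (((lam i)⁻¹) ^ (j + 1) * p i)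
       - (∑ l, ((lam l)⁻¹) ^ (j + 1) * p l * q l) * (((lam i)⁻¹) ^ (k - j + 1) * q i)
       - (∑ l, ((lam l)⁻¹) ^ (k - j + 1) * p l * q l) * (((lam i)⁻¹) ^ (j + 1) * q i))

section Aux
variable {N : ℕ}

lemma hasP (l : Fin N) (z : (Fin N → ℝ) × (Fin N → ℝ)) :
    HasFDerivAt (fun y : (Fin N → ℝ) × (Fin N → ℝ) => y.1 l)
      ((ContinuousLinearMap.proj l).comp (ContinuousLinearMap.fst ℝ (Fin N → ℝ) (Fin N → ℝ))) z :=
  ((ContinuousLinearMap.proj l).comp (ContinuousLinearMap.fst ℝ (Fin N → ℝ) (Fin N → ℝ))).hasFDerivAt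

lemma hasQ (l : Fin N) (z : (Fin N → ℝ) × (Fin N → ℝ)) :
    HasFDerivAt (fun y : (Fin N → ℝ) × (Fin N → ℝ) => y.2 l)
      ((ContinuousLinearMap.proj l).comp (ContinuousLinearMap.snd ℝ (Fin N → ℝ) (Fin N → ℝ))) z :=
  ((ContinuousLinearMap.proj l).comp (ContinuousLinearMap.snd ℝ (Fin N → ℝ) (Fin N → ℝ))).hasFDerivAt

lemma pderivP_sumPP (c : Fin N → ℝ) (z : (Fin N → ℝ) × (Fin N → ℝ)) (j : Fin N) :
    pderivP (fun y => ∑ l, c l * y.1 l * y.1 l) z j = 2 * c j * z.1 j := by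
  have h : HasFDerivAt (fun y : (Fin N → ℝ) × (Fin N → ℝ) => ∑ l, c l * y.1 l * y.1 l) _ z :=
    HasFDerivAt.fun_sum (fun l _ => ((hasP l z).const_mul (c l)).mul (hasP l z))
  rw [pderivP, h.fderiv]
  simp [Pi.single_apply, mul_ite, ite_mul]
  rw [Finset.sum_eq_single j (fun b _ hb => by simp [hb]) (by simp)]
  simp; ring

lemma pderivQ_sumPP (c : Fin N → ℝ) (z : (Fin N → ℝ) × (Fin N → ℝ)) (j : Fin N) :
    pderivQ (fun y => ∑ l, c l * y.1 l * y.1 l) z j = 0 := by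
  have h : HasFDerivAt (fun y : (Fin N → ℝ) × (Fin N → ℝ) => ∑ l, c l * y.1 l * y.1 l) _ z :=
    HasFDerivAt.fun_sum (fun l _ => ((hasP l z).const_mul (c l)).mul (hasP l z))
  rw [pderivQ, h.fderiv]; simp

lemma pderivQ_sumQQ (c : Fin N → ℝ) (z : (Fin N → ℝ) × (Fin N → ℝ)) (j : Fin N) :
    pderivQ (fun y => ∑ l, c l * y.2 l * y.2 l) z j = 2 * c j * z.2 j := by
  have h : HasFDerivAt (fun y : (Fin N → ℝ) × (Fin N → ℝ) => ∑ l, c l * y.2 l * y.2 l) _ z :=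
    HasFDerivAt.fun_sum (fun l _ => ((hasQ l z).const_mul (c l)).mul (hasQ l z))
  rw [pderivQ, h.fderiv]
  simp [Pi.single_apply, mul_ite, ite_mul]
  rw [Finset.sum_eq_single j (fun b _ hb => by simp [hb]) (by simp)]
  simp; ring

lemma pderivP_sumQQ (c : Fin N → ℝ) (z : (Fin N → ℝ) × (Fin N → ℝ)) (j : Fin N) :
    pderivP (fun y => ∑ l, c l * y.2 l * y.2 l) z j = 0 := by
  have h : HasFDerivAt (fun y : (Fin N → ℝ) × (Fin N → ℝ) => ∑ l, c l * y.2 l * y.2 l) _ z :=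
    HasFDerivAt.fun_sum (fun l _ => ((hasQ l z).const_mul (c l)).mul (hasQ l z))
  rw [pderivP, h.fderiv]; simp

lemma pderivP_sumPQ (c : Fin N → ℝ) (z : (Fin N → ℝ) × (Fin N → ℝ)) (j : Fin N) :
    pderivP (fun y => ∑ l, c l * y.1 l * y.2 l) z j = c j * z.2 j := by
  have h : HasFDerivAt (fun y : (Fin N → ℝ) × (Fin N → ℝ) => ∑ l, c l * y.1 l * y.2 l) _ z :=
    HasFDerivAt.fun_sum (fun l _ => ((hasP l z).const_mul (c l)).mul (hasQ l z))
  rw [pderivP, h.fderiv]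
  simp [Pi.single_apply, mul_ite, ite_mul]
  ring

lemma pderivQ_sumPQ (c : Fin N → ℝ) (z : (Fin N → ℝ) × (Fin N → ℝ)) (j : Fin N) :
    pderivQ (fun y => ∑ l, c l * y.1 l * y.2 l) z j = c j * z.1 j := by
  have h : HasFDerivAt (fun y : (Fin N → ℝ) × (Fin N → ℝ) => ∑ l, c l * y.1 l * y.2 l) _ z :=
    HasFDerivAt.fun_sum (fun l _ => ((hasP l z).const_mul (c l)).mul (hasQ l z))
  rw [pderivQ, h.fderiv]
  simp [Pi.single_apply, mul_ite, ite_mul]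

lemma pderivP_coordP (i : Fin N) (z : (Fin N → ℝ) × (Fin N → ℝ)) (j : Fin N) :
    pderivP (fun y => y.1 i) z j = if i = j then 1 else 0 := by
  rw [pderivP, (hasP i z).fderiv]; simp [Pi.single_apply]

lemma pderivQ_coordP (i : Fin N) (z : (Fin N → ℝ) × (Fin N → ℝ)) (j : Fin N) :
    pderivQ (fun y => y.1 i) z j = 0 := by
  rw [pderivQ, (hasP i z).fderiv]; simp

lemma pderivP_coordQ (i : Fin N) (z : (Fin N → ℝ) × (Fin N → ℝ)) (j : Fin N) :
    pderivP (fun y => y.2 i) z j = 0 := by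
  rw [pderivP, (hasQ i z).fderiv]; simp

lemma pderivQ_coordQ (i : Fin N) (z : (Fin N → ℝ) × (Fin N → ℝ)) (j : Fin N) :
    pderivQ (fun y => y.2 i) z j = if i = j then 1 else 0 := by
  rw [pderivQ, (hasQ i z).fderiv]; simp [Pi.single_apply]

lemma pderivP_const_mul {f : (Fin N → ℝ) × (Fin N → ℝ) → ℝ} {z : (Fin N → ℝ) × (Fin N → ℝ)}
    (c : ℝ) (j : Fin N) (hf : DifferentiableAt ℝ f z) :
    pderivP (fun y => c * f y) z j = c * pderivP f z j := by
  rw [pderivP, pderivP, fderiv_const_mul hf]; simp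

lemma pderivQ_const_mul {f : (Fin N → ℝ) × (Fin N → ℝ) → ℝ} {z : (Fin N → ℝ) × (Fin N → ℝ)}
    (c : ℝ) (j : Fin N) (hf : DifferentiableAt ℝ f z) :
    pderivQ (fun y => c * f y) z j = c * pderivQ f z j := by
  rw [pderivQ, pderivQ, fderiv_const_mul hf]; simp

lemma pderivP_sub {f g : (Fin N → ℝ) × (Fin N → ℝ) → ℝ} {z : (Fin N → ℝ) × (Fin N → ℝ)}
    (j : Fin N) (hf : DifferentiableAt ℝ f z) (hg : DifferentiableAt ℝ g z) :
    pderivP (fun y => f y - g y) z j = pderivP f z j - pderivP g z j := by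
  rw [pderivP, pderivP, pderivP, fderiv_fun_sub hf hg]; simp

lemma pderivQ_sub {f g : (Fin N → ℝ) × (Fin N → ℝ) → ℝ} {z : (Fin N → ℝ) × (Fin N → ℝ)}
    (j : Fin N) (hf : DifferentiableAt ℝ f z) (hg : DifferentiableAt ℝ g z) :
    pderivQ (fun y => f y - g y) z j = pderivQ f z j - pderivQ g z j := by
  rw [pderivQ, pderivQ, pderivQ, fderiv_fun_sub hf hg]; simp

lemma pderivP_mul {f g : (Fin N → ℝ) × (Fin N → ℝ) → ℝ} {z : (Fin N → ℝ) × (Fin N → ℝ)}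
    (j : Fin N) (hf : DifferentiableAt ℝ f z) (hg : DifferentiableAt ℝ g z) :
    pderivP (fun y => f y * g y) z j = f z * pderivP g z j + g z * pderivP f z j := by
  rw [pderivP, pderivP, pderivP, fderiv_fun_mul hf hg]; simp

lemma pderivQ_mul {f g : (Fin N → ℝ) × (Fin N → ℝ) → ℝ} {z : (Fin N → ℝ) × (Fin N → ℝ)}
    (j : Fin N) (hf : DifferentiableAt ℝ f z) (hg : DifferentiableAt ℝ g z) :
    pderivQ (fun y => f y * g y) z j = f z * pderivQ g z j + g z * pderivQ f z j := by
  rw [pderivQ, pderivQ, pderivQ, fderiv_fun_mul hf hg]; simp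

lemma pderivP_sum {ι : Type*} (s : Finset ι) (f : ι → (Fin N → ℝ) × (Fin N → ℝ) → ℝ)
    {z : (Fin N → ℝ) × (Fin N → ℝ)} (j : Fin N) (hf : ∀ i ∈ s, DifferentiableAt ℝ (f i) z) :
    pderivP (fun y => ∑ i ∈ s, f i y) z j = ∑ i ∈ s, pderivP (f i) z j := by
  rw [pderivP, fderiv_fun_sum hf]; simp [pderivP]

lemma pderivQ_sum {ι : Type*} (s : Finset ι) (f : ι → (Fin N → ℝ) × (Fin N → ℝ) → ℝ)
    {z : (Fin N → ℝ) × (Fin N → ℝ)} (j : Fin N) (hf : ∀ i ∈ s, DifferentiableAt ℝ (f i) z) :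
    pderivQ (fun y => ∑ i ∈ s, f i y) z j = ∑ i ∈ s, pderivQ (f i) z j := by
  rw [pderivQ, fderiv_fun_sum hf]; simp [pderivQ]

end Aux

noncomputable def DHp {N : ℕ} (lam : Fin N → ℝ) (k : ℕ) (p q : Fin N → ℝ) (m : Fin N) : ℝ :=
  -(1/2) * (2 * ((lam m)⁻¹) ^ (k + 1) * p m
    - ∑ i ∈ Finset.range (k + 1),
        (2 * ((lam m)⁻¹) ^ (i + 1) * p m * (∑ l, ((lam l)⁻¹) ^ (k - i + 1) * q l * q l)
         - ((lam m)⁻¹) ^ (i + 1) * q m * (∑ l, ((lam l)⁻¹) ^ (k - i + 1) * p l * q l)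
         - ((lam m)⁻¹) ^ (k - i + 1) * q m * (∑ l, ((lam l)⁻¹) ^ (i + 1) * p l * q l)))

noncomputable def DHq {N : ℕ} (lam : Fin N → ℝ) (k : ℕ) (p q : Fin N → ℝ) (m : Fin N) : ℝ :=
  (1/2) * ∑ i ∈ Finset.range (k + 1),
      (2 * ((lam m)⁻¹) ^ (k - i + 1) * q m * (∑ l, ((lam l)⁻¹) ^ (i + 1) * p l * p l)
       - ((lam m)⁻¹) ^ (i + 1) * p m * (∑ l, ((lam l)⁻¹) ^ (k - i + 1) * p l * q l)
       - ((lam m)⁻¹) ^ (k - i + 1) * p m * (∑ l, ((lam l)⁻¹) ^ (i + 1) * p l * q l))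

lemma pderivP_Hneg {N : ℕ} (lam : Fin N → ℝ) (k : ℕ) (p q : Fin N → ℝ) (m : Fin N) :
    pderivP (Hneg lam k) (p, q) m = DHp lam k p q m := by
  unfold Hneg DHp
  rw [pderivP_const_mul _ _ (by fun_prop)]
  rw [pderivP_sub _ (by fun_prop) (by fun_prop)]
  rw [pderivP_sumPP]
  rw [pderivP_sum (Finset.range (k + 1)) _ _ (fun i _ => by fun_prop)]
  have hsum : ∀ i ∈ Finset.range (k + 1),
      pderivP (fun y : (Fin N → ℝ) × (Fin N → ℝ) =>
        (∑ l, ((lam l)⁻¹) ^ (i + 1) * y.1 l * y.1 l)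
          * (∑ l, ((lam l)⁻¹) ^ (k - i + 1) * y.2 l * y.2 l)
        - (∑ l, ((lam l)⁻¹) ^ (i + 1) * y.1 l * y.2 l)
          * (∑ l, ((lam l)⁻¹) ^ (k - i + 1) * y.1 l * y.2 l)) (p, q) m
      = 2 * ((lam m)⁻¹) ^ (i + 1) * p m * (∑ l, ((lam l)⁻¹) ^ (k - i + 1) * q l * q l)
         - ((lam m)⁻¹) ^ (i + 1) * q m * (∑ l, ((lam l)⁻¹) ^ (k - i + 1) * p l * q l)
         - ((lam m)⁻¹) ^ (k - i + 1) * q m * (∑ l, ((lam l)⁻¹) ^ (i + 1) * p l * q l) := by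
    intro i _
    rw [pderivP_sub _ (by fun_prop) (by fun_prop),
        pderivP_mul _ (by fun_prop) (by fun_prop),
        pderivP_mul _ (by fun_prop) (by fun_prop),
        pderivP_sumPP, pderivP_sumQQ, pderivP_sumPQ, pderivP_sumPQ]
    ring
  rw [Finset.sum_congr rfl hsum]

lemma pderivQ_Hneg {N : ℕ} (lam : Fin N → ℝ) (k : ℕ) (p q : Fin N → ℝ) (m : Fin N) :
    pderivQ (Hneg lam k) (p, q) m = DHq lam k p q m := by
  unfold Hneg DHq
  rw [pderivQ_const_mul _ _ (by fun_prop)]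
  rw [pderivQ_sub _ (by fun_prop) (by fun_prop)]
  rw [pderivQ_sumPP]
  rw [pderivQ_sum (Finset.range (k + 1)) _ _ (fun i _ => by fun_prop)]
  have hsum : ∀ i ∈ Finset.range (k + 1),
      pderivQ (fun y : (Fin N → ℝ) × (Fin N → ℝ) =>
        (∑ l, ((lam l)⁻¹) ^ (i + 1) * y.1 l * y.1 l)
          * (∑ l, ((lam l)⁻¹) ^ (k - i + 1) * y.2 l * y.2 l)
        - (∑ l, ((lam l)⁻¹) ^ (i + 1) * y.1 l * y.2 l)
          * (∑ l, ((lam l)⁻¹) ^ (k - i + 1) * y.1 l * y.2 l)) (p, q) m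
      = 2 * ((lam m)⁻¹) ^ (k - i + 1) * q m * (∑ l, ((lam l)⁻¹) ^ (i + 1) * p l * p l)
         - ((lam m)⁻¹) ^ (i + 1) * p m * (∑ l, ((lam l)⁻¹) ^ (k - i + 1) * p l * q l)
         - ((lam m)⁻¹) ^ (k - i + 1) * p m * (∑ l, ((lam l)⁻¹) ^ (i + 1) * p l * q l) := by
    intro i _
    rw [pderivQ_sub _ (by fun_prop) (by fun_prop),
        pderivQ_mul _ (by fun_prop) (by fun_prop),
        pderivQ_mul _ (by fun_prop) (by fun_prop),
        pderivQ_sumPP, pderivQ_sumQQ, pderivQ_sumPQ, pderivQ_sumPQ]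
    ring
  rw [Finset.sum_congr rfl hsum]
  ring

lemma sum_factor3 {N : ℕ} (u v w : Fin N → ℝ) (K L M : ℝ) :
    ∑ m, (u m * K + v m * L + w m * M)
      = (∑ m, u m) * K + (∑ m, v m) * L + (∑ m, w m) * M := by
  rw [Finset.sum_add_distrib, Finset.sum_add_distrib,
    ← Finset.sum_mul, ← Finset.sum_mul, ← Finset.sum_mul]

lemma key0 {N : ℕ} (lam : Fin N → ℝ) (k : ℕ) (p q : Fin N → ℝ) :
    ∑ i ∈ Finset.range (k + 1),
      ((∑ l, ((lam l)⁻¹) ^ (i + 1) * p l * p l) * (∑ l, ((lam l)⁻¹) ^ (k - i + 1) * p l * q l)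
        - (∑ l, ((lam l)⁻¹) ^ (k - i + 1) * p l * p l) * (∑ l, ((lam l)⁻¹) ^ (i + 1) * p l * q l))
      = 0 := by
  rw [Finset.sum_sub_distrib, sub_eq_zero,
    ← Finset.sum_range_reflect (fun i =>
      (∑ l, ((lam l)⁻¹) ^ (i + 1) * p l * p l) * (∑ l, ((lam l)⁻¹) ^ (k - i + 1) * p l * q l)) (k + 1)]
  refine Finset.sum_congr rfl fun j hj => ?_
  have hjk := Finset.mem_range.mp hj
  have h1 : k + 1 - 1 - j = k - j := by omega
  have h2 : k - (k - j) = j := by omega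
  rw [h1, h2]

/-- `∑_m p_m ∂H/∂q_m = 0`. -/
lemma F1 {N : ℕ} (lam : Fin N → ℝ) (k : ℕ) (p q : Fin N → ℝ) :
    ∑ m, p m * DHq lam k p q m = 0 := by
  unfold DHq
  have e1 : ∀ m : Fin N, p m * ((1/2 : ℝ) * ∑ i ∈ Finset.range (k + 1),
      (2 * ((lam m)⁻¹) ^ (k - i + 1) * q m * (∑ l, ((lam l)⁻¹) ^ (i + 1) * p l * p l)
       - ((lam m)⁻¹) ^ (i + 1) * p m * (∑ l, ((lam l)⁻¹) ^ (k - i + 1) * p l * q l)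
       - ((lam m)⁻¹) ^ (k - i + 1) * p m * (∑ l, ((lam l)⁻¹) ^ (i + 1) * p l * q l)))
      = ∑ i ∈ Finset.range (k + 1),
        ((((lam m)⁻¹) ^ (k - i + 1) * p m * q m) * (∑ l, ((lam l)⁻¹) ^ (i + 1) * p l * p l)
         + (-(1/2) * (((lam m)⁻¹) ^ (i + 1) * p m * p m)) * (∑ l, ((lam l)⁻¹) ^ (k - i + 1) * p l * q l)
         + (-(1/2) * (((lam m)⁻¹) ^ (k - i + 1) * p m * p m)) * (∑ l, ((lam l)⁻¹) ^ (i + 1) * p l * q l)) := by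
    intro m
    rw [Finset.mul_sum, Finset.mul_sum]
    exact Finset.sum_congr rfl fun i _ => by ring
  rw [Finset.sum_congr rfl fun m _ => e1 m, Finset.sum_comm]
  have e2 : ∀ i ∈ Finset.range (k + 1),
      (∑ m, ((((lam m)⁻¹) ^ (k - i + 1) * p m * q m) * (∑ l, ((lam l)⁻¹) ^ (i + 1) * p l * p l)
         + (-(1/2 : ℝ) * (((lam m)⁻¹) ^ (i + 1) * p m * p m)) * (∑ l, ((lam l)⁻¹) ^ (k - i + 1) * p l * q l)
         + (-(1/2) * (((lam m)⁻¹) ^ (k - i + 1) * p m * p m)) * (∑ l, ((lam l)⁻¹) ^ (i + 1) * p l * q l)))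
      = (1/2) * ((∑ l, ((lam l)⁻¹) ^ (i + 1) * p l * p l) * (∑ l, ((lam l)⁻¹) ^ (k - i + 1) * p l * q l)
        - (∑ l, ((lam l)⁻¹) ^ (k - i + 1) * p l * p l) * (∑ l, ((lam l)⁻¹) ^ (i + 1) * p l * q l)) := by
    intro i _
    rw [sum_factor3]
    rw [show (∑ m, ((lam m)⁻¹) ^ (k - i + 1) * p m * q m)
        = ∑ l, ((lam l)⁻¹) ^ (k - i + 1) * p l * q l from rfl]
    rw [show (∑ m, -(1/2 : ℝ) * (((lam m)⁻¹) ^ (i + 1) * p m * p m))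
        = -(1/2) * ∑ l, ((lam l)⁻¹) ^ (i + 1) * p l * p l from (Finset.mul_sum _ _ _).symm]
    rw [show (∑ m, -(1/2 : ℝ) * (((lam m)⁻¹) ^ (k - i + 1) * p m * p m))
        = -(1/2) * ∑ l, ((lam l)⁻¹) ^ (k - i + 1) * p l * p l from (Finset.mul_sum _ _ _).symm]
    ring
  rw [Finset.sum_congr rfl e2, ← Finset.mul_sum, key0, mul_zero]

/-- `∑_m p_m ∂H/∂p_m`. -/
lemma F2a {N : ℕ} (lam : Fin N → ℝ) (k : ℕ) (p q : Fin N → ℝ) :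
    ∑ m, p m * DHp lam k p q m
      = -(∑ l, ((lam l)⁻¹) ^ (k + 1) * p l * p l)
        + ∑ i ∈ Finset.range (k + 1),
          ((∑ l, ((lam l)⁻¹) ^ (i + 1) * p l * p l) * (∑ l, ((lam l)⁻¹) ^ (k - i + 1) * q l * q l)
           - (∑ l, ((lam l)⁻¹) ^ (i + 1) * p l * q l) * (∑ l, ((lam l)⁻¹) ^ (k - i + 1) * p l * q l)) := by
  unfold DHp
  have e1 : ∀ m : Fin N, p m * (-(1/2 : ℝ) * (2 * ((lam m)⁻¹) ^ (k + 1) * p m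
      - ∑ i ∈ Finset.range (k + 1),
        (2 * ((lam m)⁻¹) ^ (i + 1) * p m * (∑ l, ((lam l)⁻¹) ^ (k - i + 1) * q l * q l)
         - ((lam m)⁻¹) ^ (i + 1) * q m * (∑ l, ((lam l)⁻¹) ^ (k - i + 1) * p l * q l)
         - ((lam m)⁻¹) ^ (k - i + 1) * q m * (∑ l, ((lam l)⁻¹) ^ (i + 1) * p l * q l))))
      = -(((lam m)⁻¹) ^ (k + 1) * p m * p m)
        + ∑ i ∈ Finset.range (k + 1),
          ((((lam m)⁻¹) ^ (i + 1) * p m * p m) * (∑ l, ((lam l)⁻¹) ^ (k - i + 1) * q l * q l)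
           + (-(1/2) * (((lam m)⁻¹) ^ (i + 1) * p m * q m)) * (∑ l, ((lam l)⁻¹) ^ (k - i + 1) * p l * q l)
           + (-(1/2) * (((lam m)⁻¹) ^ (k - i + 1) * p m * q m)) * (∑ l, ((lam l)⁻¹) ^ (i + 1) * p l * q l)) := by
    intro m
    rw [show p m * (-(1/2 : ℝ) * (2 * ((lam m)⁻¹) ^ (k + 1) * p m
      - ∑ i ∈ Finset.range (k + 1),
        (2 * ((lam m)⁻¹) ^ (i + 1) * p m * (∑ l, ((lam l)⁻¹) ^ (k - i + 1) * q l * q l)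
         - ((lam m)⁻¹) ^ (i + 1) * q m * (∑ l, ((lam l)⁻¹) ^ (k - i + 1) * p l * q l)
         - ((lam m)⁻¹) ^ (k - i + 1) * q m * (∑ l, ((lam l)⁻¹) ^ (i + 1) * p l * q l))))
      = -(((lam m)⁻¹) ^ (k + 1) * p m * p m)
        + (1/2 * p m) * ∑ i ∈ Finset.range (k + 1),
        (2 * ((lam m)⁻¹) ^ (i + 1) * p m * (∑ l, ((lam l)⁻¹) ^ (k - i + 1) * q l * q l)
         - ((lam m)⁻¹) ^ (i + 1) * q m * (∑ l, ((lam l)⁻¹) ^ (k - i + 1) * p l * q l)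
         - ((lam m)⁻¹) ^ (k - i + 1) * q m * (∑ l, ((lam l)⁻¹) ^ (i + 1) * p l * q l)) from by ring]
    rw [Finset.mul_sum]
    exact congrArg _ (Finset.sum_congr rfl fun i _ => by ring)
  rw [Finset.sum_congr rfl fun m _ => e1 m, Finset.sum_add_distrib, Finset.sum_comm]
  congr 1
  · rw [Finset.sum_neg_distrib]
  · refine Finset.sum_congr rfl fun i _ => ?_
    rw [sum_factor3]
    rw [show (∑ m, ((lam m)⁻¹) ^ (i + 1) * p m * p m)
        = ∑ l, ((lam l)⁻¹) ^ (i + 1) * p l * p l from rfl]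
    rw [show (∑ m, -(1/2 : ℝ) * (((lam m)⁻¹) ^ (i + 1) * p m * q m))
        = -(1/2) * ∑ l, ((lam l)⁻¹) ^ (i + 1) * p l * q l from (Finset.mul_sum _ _ _).symm]
    rw [show (∑ m, -(1/2 : ℝ) * (((lam m)⁻¹) ^ (k - i + 1) * p m * q m))
        = -(1/2) * ∑ l, ((lam l)⁻¹) ^ (k - i + 1) * p l * q l from (Finset.mul_sum _ _ _).symm]
    ring

/-- `∑_m q_m ∂H/∂q_m`. -/
lemma F2b {N : ℕ} (lam : Fin N → ℝ) (k : ℕ) (p q : Fin N → ℝ) :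
    ∑ m, q m * DHq lam k p q m
      = ∑ i ∈ Finset.range (k + 1),
          ((∑ l, ((lam l)⁻¹) ^ (i + 1) * p l * p l) * (∑ l, ((lam l)⁻¹) ^ (k - i + 1) * q l * q l)
           - (∑ l, ((lam l)⁻¹) ^ (i + 1) * p l * q l) * (∑ l, ((lam l)⁻¹) ^ (k - i + 1) * p l * q l)) := by
  unfold DHq
  have e1 : ∀ m : Fin N, q m * ((1/2 : ℝ) * ∑ i ∈ Finset.range (k + 1),
      (2 * ((lam m)⁻¹) ^ (k - i + 1) * q m * (∑ l, ((lam l)⁻¹) ^ (i + 1) * p l * p l)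
       - ((lam m)⁻¹) ^ (i + 1) * p m * (∑ l, ((lam l)⁻¹) ^ (k - i + 1) * p l * q l)
       - ((lam m)⁻¹) ^ (k - i + 1) * p m * (∑ l, ((lam l)⁻¹) ^ (i + 1) * p l * q l)))
      = ∑ i ∈ Finset.range (k + 1),
        ((((lam m)⁻¹) ^ (k - i + 1) * q m * q m) * (∑ l, ((lam l)⁻¹) ^ (i + 1) * p l * p l)
         + (-(1/2) * (((lam m)⁻¹) ^ (i + 1) * p m * q m)) * (∑ l, ((lam l)⁻¹) ^ (k - i + 1) * p l * q l)
         + (-(1/2) * (((lam m)⁻¹) ^ (k - i + 1) * p m * q m)) * (∑ l, ((lam l)⁻¹) ^ (i + 1) * p l * q l)) := by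
    intro m
    rw [Finset.mul_sum, Finset.mul_sum]
    exact Finset.sum_congr rfl fun i _ => by ring
  rw [Finset.sum_congr rfl fun m _ => e1 m, Finset.sum_comm]
  refine Finset.sum_congr rfl fun i _ => ?_
  rw [sum_factor3]
  rw [show (∑ m, ((lam m)⁻¹) ^ (k - i + 1) * q m * q m)
      = ∑ l, ((lam l)⁻¹) ^ (k - i + 1) * q l * q l from rfl]
  rw [show (∑ m, -(1/2 : ℝ) * (((lam m)⁻¹) ^ (i + 1) * p m * q m))
      = -(1/2) * ∑ l, ((lam l)⁻¹) ^ (i + 1) * p l * q l from (Finset.mul_sum _ _ _).symm]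
  rw [show (∑ m, -(1/2 : ℝ) * (((lam m)⁻¹) ^ (k - i + 1) * p m * q m))
      = -(1/2) * ∑ l, ((lam l)⁻¹) ^ (k - i + 1) * p l * q l from (Finset.mul_sum _ _ _).symm]
  ring

lemma F2 {N : ℕ} (lam : Fin N → ℝ) (k : ℕ) (p q : Fin N → ℝ) :
    ∑ m, (p m * DHp lam k p q m - q m * DHq lam k p q m)
      = -(∑ l, ((lam l)⁻¹) ^ (k + 1) * p l * p l) := by
  rw [Finset.sum_sub_distrib, F2a, F2b]
  ring

lemma pderivP_casF {N : ℕ} (z : (Fin N → ℝ) × (Fin N → ℝ)) (j : Fin N) :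
    pderivP casF z j = z.2 j := by
  have h : HasFDerivAt (casF (N := N)) _ z :=
    HasFDerivAt.fun_sum (fun l (_ : l ∈ Finset.univ) => (hasP l z).mul (hasQ l z))
  rw [pderivP, h.fderiv]
  simp [Pi.single_apply, mul_ite, ite_mul]

lemma pderivQ_casF {N : ℕ} (z : (Fin N → ℝ) × (Fin N → ℝ)) (j : Fin N) :
    pderivQ casF z j = z.1 j := by
  have h : HasFDerivAt (casF (N := N)) _ z :=
    HasFDerivAt.fun_sum (fun l (_ : l ∈ Finset.univ) => (hasP l z).mul (hasQ l z))
  rw [pderivQ, h.fderiv]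
  simp [Pi.single_apply, mul_ite, ite_mul]

lemma pderivP_casG {N : ℕ} (z : (Fin N → ℝ) × (Fin N → ℝ)) (j : Fin N) :
    pderivP casG z j = 2 * z.1 j := by
  have h : HasFDerivAt (casG (N := N)) _ z :=
    (HasFDerivAt.fun_sum (fun l (_ : l ∈ Finset.univ) => (hasP l z).mul (hasP l z))).sub_const 1
  rw [pderivP, h.fderiv]
  simp [Pi.single_apply, mul_ite, ite_mul]
  rw [Finset.sum_eq_single j (fun b _ hb => by simp [hb]) (by simp)]
  simp; ring

lemma pderivQ_casG {N : ℕ} (z : (Fin N → ℝ) × (Fin N → ℝ)) (j : Fin N) :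
    pderivQ casG z j = 0 := by
  have h : HasFDerivAt (casG (N := N)) _ z :=
    (HasFDerivAt.fun_sum (fun l (_ : l ∈ Finset.univ) => (hasP l z).mul (hasP l z))).sub_const 1
  rw [pderivQ, h.fderiv]
  simp

lemma poisson_coordP_H {N : ℕ} (lam : Fin N → ℝ) (k : ℕ) (p q : Fin N → ℝ) (i : Fin N) :
    poisson (fun x => x.1 i) (Hneg lam k) (p, q) = -DHq lam k p q i := by
  unfold poisson
  simp only [pderivQ_coordP, pderivP_coordP, pderivP_Hneg, pderivQ_Hneg, zero_mul, ite_mul,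
    one_mul, zero_sub]
  rw [Finset.sum_eq_single i (fun b _ hb => by simp [Ne.symm hb]) (fun h => absurd (Finset.mem_univ i) h)]
  simp

lemma poisson_coordQ_H {N : ℕ} (lam : Fin N → ℝ) (k : ℕ) (p q : Fin N → ℝ) (i : Fin N) :
    poisson (fun x => x.2 i) (Hneg lam k) (p, q) = DHp lam k p q i := by
  unfold poisson
  simp only [pderivQ_coordQ, pderivP_coordQ, pderivP_Hneg, pderivQ_Hneg, zero_mul, ite_mul,
    one_mul, sub_zero]
  rw [Finset.sum_eq_single i (fun b _ hb => by simp [Ne.symm hb]) (fun h => absurd (Finset.mem_univ i) h)]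
  simp

lemma poisson_coordP_F {N : ℕ} (p q : Fin N → ℝ) (i : Fin N) :
    poisson (fun x => x.1 i) casF (p, q) = -(p i) := by
  unfold poisson
  simp only [pderivQ_coordP, pderivP_coordP, pderivP_casF, pderivQ_casF, zero_mul, ite_mul,
    one_mul, zero_sub]
  rw [Finset.sum_eq_single i (fun b _ hb => by simp [Ne.symm hb]) (fun h => absurd (Finset.mem_univ i) h)]
  simp

lemma poisson_coordP_G {N : ℕ} (p q : Fin N → ℝ) (i : Fin N) :
    poisson (fun x => x.1 i) casG (p, q) = 0 := by
  unfold poisson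
  simp [pderivQ_coordP, pderivP_coordP, pderivP_casG, pderivQ_casG]

lemma poisson_coordQ_F {N : ℕ} (p q : Fin N → ℝ) (i : Fin N) :
    poisson (fun x => x.2 i) casF (p, q) = q i := by
  unfold poisson
  simp only [pderivQ_coordQ, pderivP_coordQ, pderivP_casF, pderivQ_casF, zero_mul, ite_mul,
    one_mul, sub_zero]
  rw [Finset.sum_eq_single i (fun b _ hb => by simp [Ne.symm hb]) (fun h => absurd (Finset.mem_univ i) h)]
  simp

lemma poisson_coordQ_G {N : ℕ} (p q : Fin N → ℝ) (i : Fin N) :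
    poisson (fun x => x.2 i) casG (p, q) = 2 * p i := by
  unfold poisson
  simp only [pderivQ_coordQ, pderivP_coordQ, pderivP_casG, pderivQ_casG, zero_mul, ite_mul,
    one_mul, mul_zero, sub_zero]
  rw [Finset.sum_eq_single i (fun b _ hb => by simp [Ne.symm hb]) (fun h => absurd (Finset.mem_univ i) h)]
  simp

lemma poisson_F_G {N : ℕ} (p q : Fin N → ℝ) (hsph : ∑ i, p i * p i = 1) :
    poisson casF casG (p, q) = 2 := by
  unfold poisson
  simp only [pderivQ_casF, pderivP_casF, pderivP_casG, pderivQ_casG, mul_zero, sub_zero]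
  try dsimp only
  rw [show (∑ j, p j * (2 * p j)) = 2 * ∑ j, p j * p j from by
    rw [Finset.mul_sum]; exact Finset.sum_congr rfl fun j _ => by ring]
  rw [hsph]; norm_num

lemma poisson_G_H {N : ℕ} (lam : Fin N → ℝ) (k : ℕ) (p q : Fin N → ℝ) :
    poisson casG (Hneg lam k) (p, q) = 0 := by
  unfold poisson
  simp only [pderivQ_casG, pderivP_casG, pderivP_Hneg, pderivQ_Hneg, zero_mul, zero_sub]
  try dsimp only
  rw [show (∑ j, -(2 * p j * DHq lam k p q j)) = (-2) * ∑ j, p j * DHq lam k p q j from by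
    rw [Finset.mul_sum]; exact Finset.sum_congr rfl fun j _ => by ring]
  rw [F1]; ring

lemma poisson_F_H {N : ℕ} (lam : Fin N → ℝ) (k : ℕ) (p q : Fin N → ℝ) :
    poisson casF (Hneg lam k) (p, q) = -(∑ l, ((lam l)⁻¹) ^ (k + 1) * p l * p l) := by
  unfold poisson
  simp only [pderivQ_casF, pderivP_casF, pderivP_Hneg, pderivQ_Hneg]
  try dsimp only
  rw [F2]

lemma F3 {N : ℕ} (lam : Fin N → ℝ) (k : ℕ) (p q : Fin N → ℝ) (i : Fin N) :
    -DHq lam k p q i = bnP lam k p q i := by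
  unfold DHq bnP
  rw [neg_mul_eq_mul_neg, ← Finset.sum_neg_distrib]
  exact congrArg _ (Finset.sum_congr rfl fun j _ => by ring)

lemma F4 {N : ℕ} (lam : Fin N → ℝ) (k : ℕ) (p q : Fin N → ℝ) (i : Fin N) :
    DHp lam k p q i + (∑ l, ((lam l)⁻¹) ^ (k + 1) * p l * p l) * p i = bnQ lam k p q i := by
  unfold DHp bnQ
  rw [show (∑ j ∈ Finset.range (k + 1),
      (2 * ((lam i)⁻¹) ^ (j + 1) * p i * (∑ l, ((lam l)⁻¹) ^ (k - j + 1) * q l * q l)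
       - ((lam i)⁻¹) ^ (j + 1) * q i * (∑ l, ((lam l)⁻¹) ^ (k - j + 1) * p l * q l)
       - ((lam i)⁻¹) ^ (k - j + 1) * q i * (∑ l, ((lam l)⁻¹) ^ (j + 1) * p l * q l)))
      = ∑ j ∈ Finset.range (k + 1),
      (2 * (∑ l, ((lam l)⁻¹) ^ (k - j + 1) * q l * q l) * (((lam i)⁻¹) ^ (j + 1) * p i)
       - (∑ l, ((lam l)⁻¹) ^ (j + 1) * p l * q l) * (((lam i)⁻¹) ^ (k - j + 1) * q i)
       - (∑ l, ((lam l)⁻¹) ^ (k - j + 1) * p l * q l) * (((lam i)⁻¹) ^ (j + 1) * q i))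
    from Finset.sum_congr rfl fun j _ => by ring]
  ring


/-- On `TS^{N-1}`, the Dirac-Hamilton equations of `H_{-k}` coincide
with the `k`-th backward Neumann system. -/
theorem dirac_hamilton_backward_neumann
    (N : ℕ) (hN : 2 ≤ N) (lam : Fin N → ℝ)
    (hdist : Function.Injective lam) (hnz : ∀ i, lam i ≠ 0)
    (k : ℕ) (p q : Fin N → ℝ)
    (hsph : ∑ i, p i * p i = 1) (htan : ∑ i, p i * q i = 0) :
    ∀ i : Fin N,
      dirac (fun x => x.1 i) (Hneg lam k) (p, q) = bnP lam k p q i ∧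
      dirac (fun x => x.2 i) (Hneg lam k) (p, q) = bnQ lam k p q i := by
  intro i
  constructor
  · unfold dirac
    rw [poisson_coordP_H, poisson_F_G p q hsph, poisson_coordP_F, poisson_coordP_G,
      poisson_G_H, poisson_F_H, ← F3 lam k p q i]
    ring
  · unfold dirac
    rw [poisson_coordQ_H, poisson_F_G p q hsph, poisson_coordQ_F, poisson_coordQ_G,
      poisson_G_H, poisson_F_H, ← F4 lam k p q i]
    ring
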